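/- For p = q = 1/2, H(N_{1/2,1/2}(E₁₁)) < H(N_{1/2,1/2}(E₀₀)); explicitly, N_{1/2,1/2}(E₁₁) = diag(2/5, 1/5, 2/5) and N_{1/2,1/2}(E₀₀) = diag(3/10, 2/5, 3/10), and −(2·(2/5)log(2/5) + (1/5)log(1/5)) < −(2·(3/10)log(3/10) + (2/5)log(2/5)). In particular, the coherent state E₀₀ = |0⟩⟨0| is not a minimizer of the output entropy of N_{1/2,1/2}. -/

import Mathlib

open Matrix BigOperators
open scoped Kronecker ComplexOrder

noncomputable section


/-- `Φ^{2→2}_2`. -/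
def Phi2 (A : Matrix (Fin 3) (Fin 3) ℂ) : Matrix (Fin 3) (Fin 3) ℂ :=
  (1 / 2 : ℂ) •
    !![A 0 0 + A 1 1, A 1 2, -(A 0 2);
       A 2 1, A 0 0 + A 2 2, A 0 1;
       -(A 2 0), A 1 0, A 1 1 + A 2 2]

/-- `Φ^{2→2}_4`. -/
def Phi4 (A : Matrix (Fin 3) (Fin 3) ℂ) : Matrix (Fin 3) (Fin 3) ℂ :=
  (1 / 10 : ℂ) •
    !![A 0 0 + 3 * A 1 1 + 6 * A 2 2, -2 * A 0 1 - 3 * A 1 2, A 0 2;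
       -2 * A 1 0 - 3 * A 2 1, 3 * A 0 0 + 4 * A 1 1 + 3 * A 2 2, -3 * A 0 1 - 2 * A 1 2;
       A 2 0, -3 * A 1 0 - 2 * A 2 1, 6 * A 0 0 + 3 * A 1 1 + A 2 2]

/-- `N_{p,q} = (1-p-q)Φ₀ + pΦ₂ + qΦ₄` (with `Φ₀ = id`). -/
def Nmap (p q : ℝ) (A : Matrix (Fin 3) (Fin 3) ℂ) : Matrix (Fin 3) (Fin 3) ℂ :=
  ((1 - p - q : ℝ) : ℂ) • A + ((p : ℝ) : ℂ) • Phi2 A + ((q : ℝ) : ℂ) • Phi4 A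

open Classical in
/-- von Neumann entropy `H(ρ) = -∑ λ_i log λ_i` (natural log), via the eigenvalues
of a Hermitian matrix (junk value `0` on non-Hermitian matrices). -/
noncomputable def vnEntropy {n : ℕ} (ρ : Matrix (Fin n) (Fin n) ℂ) : ℝ :=
  if h : ρ.IsHermitian then -∑ i, h.eigenvalues i * Real.log (h.eigenvalues i) else 0

/-- Every eigenvalue of a real diagonal 3×3 matrix is one of the diagonal entries. -/
lemma eig_mem (d : Fin 3 → ℝ) (h : (Matrix.diagonal (fun i => ((d i : ℝ) : ℂ))).IsHermitian)
    (i : Fin 3) : ∃ j, h.eigenvalues i = d j := by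
  have hv := h.mulVec_eigenvectorBasis i
  have hne : ⇑(h.eigenvectorBasis i) ≠ 0 := by
    exact (WithLp.ofLp_eq_zero (p := 2)).not.mpr (h.eigenvectorBasis.orthonormal.ne_zero i)
  obtain ⟨j, hj⟩ := Function.ne_iff.mp hne
  refine ⟨j, ?_⟩
  have hthis := congrFun hv j
  rw [Matrix.mulVec_diagonal] at hthis
  simp only [Pi.smul_apply, Complex.real_smul, smul_eq_mul] at hthis
  have hj' : (WithLp.equiv 2 (Fin 3 → ℂ)) (h.eigenvectorBasis i) j ≠ 0 := by simpa using hj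
  have h2 : ((d j : ℂ) - (h.eigenvalues i : ℂ)) *
      (WithLp.equiv 2 (Fin 3 → ℂ)) (h.eigenvectorBasis i) j = 0 := by
    change ((d j : ℂ) - (h.eigenvalues i : ℂ)) * (h.eigenvectorBasis i).ofLp j = 0
    linear_combination hthis
  rcases mul_eq_zero.mp h2 with h3 | h3
  · have : (d j : ℂ) = (h.eigenvalues i : ℂ) := by linear_combination h3
    exact_mod_cast this.symm
  · exact absurd h3 hj'

/-- The sum of the eigenvalues of a real diagonal 3×3 matrix is the trace. -/
lemma eig_sum (d : Fin 3 → ℝ) (h : (Matrix.diagonal (fun i => ((d i : ℝ) : ℂ))).IsHermitian) :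
    ∑ i, h.eigenvalues i = ∑ i, d i := by
  have hs := h.spectral_theorem
  have htr := congrArg Matrix.trace hs
  rw [Unitary.conjStarAlgAut_apply, Matrix.trace_mul_cycle, Unitary.coe_star_mul_self, Matrix.one_mul,
    Matrix.trace_diagonal, Matrix.trace_diagonal] at htr
  have : ((∑ i, d i : ℝ) : ℂ) = ((∑ i, h.eigenvalues i : ℝ) : ℂ) := by
    push_cast
    simpa using htr
  exact_mod_cast this.symm

lemma sum_log_of_two_vals (a b : ℝ) (hab : a ≠ b) (lam : Fin 3 → ℝ)
    (hm : ∀ i, lam i = a ∨ lam i = b) (hs : ∑ i, lam i = 2 * a + b) :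
    ∑ i, lam i * Real.log (lam i) = 2 * a * Real.log a + b * Real.log b := by
  rw [Fin.sum_univ_three] at hs ⊢
  rcases hm 0 with h0 | h0 <;> rcases hm 1 with h1 | h1 <;> rcases hm 2 with h2 | h2 <;>
    rw [h0, h1, h2] at hs ⊢ <;>
    first
      | ring1
      | (exfalso; exact hab (by linarith))

lemma diag_eq (a b : ℝ) :
    !![(a : ℂ), 0, 0; 0, (b : ℂ), 0; 0, 0, (a : ℂ)]
      = Matrix.diagonal (fun i => ((![a, b, a] i : ℝ) : ℂ)) := by
  ext i j
  fin_cases i <;> fin_cases j <;> simp [Matrix.diagonal_apply, Matrix.vecHead, Matrix.vecTail]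

lemma vnEntropy_diag (a b : ℝ) (hab : a ≠ b) :
    vnEntropy !![(a : ℂ), 0, 0; 0, (b : ℂ), 0; 0, 0, (a : ℂ)]
      = -(2 * a * Real.log a + b * Real.log b) := by
  rw [diag_eq]
  have h : (Matrix.diagonal (fun i => ((![a, b, a] i : ℝ) : ℂ))).IsHermitian := by
    apply Matrix.isHermitian_diagonal_of_self_adjoint
    ext i
    simp [Pi.star_apply, Complex.star_def, Complex.conj_ofReal]
  rw [vnEntropy, dif_pos h, sum_log_of_two_vals a b hab h.eigenvalues]
  · intro i
    obtain ⟨j, hj⟩ := eig_mem ![a, b, a] h i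
    fin_cases j <;> simp_all
  · rw [eig_sum ![a, b, a] h, Fin.sum_univ_three]
    simp; ring

/-- for `p = q = 1/2`, `H(N(E₁₁)) < H(N(E₀₀))`; explicitly
`N(E₁₁) = diag(2/5, 1/5, 2/5)`, `N(E₀₀) = diag(3/10, 2/5, 3/10)` and the
corresponding inequality of entropies holds. In particular the coherent state
`E₀₀` is not a minimizer of the output entropy of `N_{1/2,1/2}`. -/
theorem stmt_12 :
    vnEntropy (Nmap (1/2) (1/2) (Matrix.single 1 1 1))
        < vnEntropy (Nmap (1/2) (1/2) (Matrix.single 0 0 1))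
    ∧ Nmap (1/2) (1/2) (Matrix.single 1 1 1)
        = !![(2/5 : ℂ), 0, 0; 0, 1/5, 0; 0, 0, 2/5]
    ∧ Nmap (1/2) (1/2) (Matrix.single 0 0 1)
        = !![(3/10 : ℂ), 0, 0; 0, 2/5, 0; 0, 0, 3/10]
    ∧ -(2 * (2/5 : ℝ) * Real.log (2/5) + (1/5 : ℝ) * Real.log (1/5))
        < -(2 * (3/10 : ℝ) * Real.log (3/10) + (2/5 : ℝ) * Real.log (2/5)) := by
  have hM1 : Nmap (1/2) (1/2) (Matrix.single 1 1 1)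
      = !![(2/5 : ℂ), 0, 0; 0, 1/5, 0; 0, 0, 2/5] := by
    ext i j
    fin_cases i <;> fin_cases j <;>
      simp [Nmap, Phi2, Phi4, Matrix.single] <;> norm_num
  have hM0 : Nmap (1/2) (1/2) (Matrix.single 0 0 1)
      = !![(3/10 : ℂ), 0, 0; 0, 2/5, 0; 0, 0, 3/10] := by
    ext i j
    fin_cases i <;> fin_cases j <;>
      simp [Nmap, Phi2, Phi4, Matrix.single] <;> norm_num
  have key : -(2 * (2/5 : ℝ) * Real.log (2/5) + (1/5 : ℝ) * Real.log (1/5))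
      < -(2 * (3/10 : ℝ) * Real.log (3/10) + (2/5 : ℝ) * Real.log (2/5)) := by
    have l25 : Real.log (2/5 : ℝ) = Real.log 2 - Real.log 5 := by
      rw [Real.log_div (by norm_num) (by norm_num)]
    have l15 : Real.log (1/5 : ℝ) = -Real.log 5 := by
      rw [one_div, Real.log_inv]
    have l310 : Real.log (3/10 : ℝ) = Real.log 3 - (Real.log 2 + Real.log 5) := by
      rw [Real.log_div (by norm_num) (by norm_num), show (10 : ℝ) = 2 * 5 by norm_num,
        Real.log_mul (by norm_num) (by norm_num)]
    have h27 : Real.log (27 : ℝ) < Real.log 32 :=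
      Real.log_lt_log (by norm_num) (by norm_num)
    have h3 : Real.log (27 : ℝ) = 3 * Real.log 3 := by
      rw [show (27 : ℝ) = 3 ^ 3 by norm_num, Real.log_pow]; push_cast; ring
    have h2 : Real.log (32 : ℝ) = 5 * Real.log 2 := by
      rw [show (32 : ℝ) = 2 ^ 5 by norm_num, Real.log_pow]; push_cast; ring
    rw [l25, l15, l310]
    rw [h3, h2] at h27
    linarith
  refine ⟨?_, hM1, hM0, key⟩
  rw [hM1, hM0]
  have e1 : ((2/5 : ℝ) : ℂ) = (2/5 : ℂ) := by push_cast; ring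
  have e2 : ((1/5 : ℝ) : ℂ) = (1/5 : ℂ) := by push_cast; ring
  have e3 : ((3/10 : ℝ) : ℂ) = (3/10 : ℂ) := by push_cast; ring
  calc vnEntropy !![(2/5 : ℂ), 0, 0; 0, 1/5, 0; 0, 0, 2/5]
      = -(2 * (2/5 : ℝ) * Real.log (2/5) + (1/5 : ℝ) * Real.log (1/5)) := by
        rw [← e1, ← e2]; exact vnEntropy_diag (2/5) (1/5) (by norm_num)
    _ < -(2 * (3/10 : ℝ) * Real.log (3/10) + (2/5 : ℝ) * Real.log (2/5)) := key
    _ = vnEntropy !![(3/10 : ℂ), 0, 0; 0, 2/5, 0; 0, 0, 3/10] := by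
        rw [← e3, ← e1]; exact (vnEntropy_diag (3/10) (2/5) (by norm_num)).symm

end
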